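/- Suppose (B_j) is a sequence of non-negative real numbers satisfying B_{j+1} ≤ B_j/2 + P(j)·2^{-j} for all j ≥ 0, where P is a polynomial with non-negative coefficients. Then B_j ≤ Q(j)·2^{-j} for all j ≥ 0, where Q(t) = ∫₀ᵗ 2P(r) dr + B₀. -/
import Mathlib

lemma poly_eval_mono (P : Polynomial ℝ) (hP : ∀ k, 0 ≤ P.coeff k)
    {x y : ℝ} (hx : 0 ≤ x) (hxy : x ≤ y) : P.eval x ≤ P.eval y := by
  rw [Polynomial.eval_eq_sum_range, Polynomial.eval_eq_sum_range]
  apply Finset.sum_le_sum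
  intro i _
  exact mul_le_mul_of_nonneg_left (pow_le_pow_left₀ hx hxy i) (hP i)

lemma poly_eval_nonneg (P : Polynomial ℝ) (hP : ∀ k, 0 ≤ P.coeff k)
    {x : ℝ} (hx : 0 ≤ x) : 0 ≤ P.eval x := by
  rw [Polynomial.eval_eq_sum_range]
  apply Finset.sum_nonneg
  intro i _
  exact mul_nonneg (hP i) (pow_nonneg hx i)

/-- If `B_{j+1} ≤ B_j/2 + P(j)·2^{-j}` with `P` a polynomial with non-negative
coefficients, then `B_j ≤ Q(j)·2^{-j}` where `Q(t) = ∫₀ᵗ 2P(r) dr + B₀`. -/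
theorem induction_with_polynomial (P : Polynomial ℝ) (hP : ∀ k, 0 ≤ P.coeff k)
    (B : ℕ → ℝ) (hB : ∀ j, 0 ≤ B j)
    (hrec : ∀ j : ℕ, B (j + 1) ≤ B j / 2 + P.eval (j : ℝ) * (2 : ℝ) ^ (-(j : ℝ))) :
    ∀ j : ℕ, B j ≤ ((∫ r in (0:ℝ)..(j : ℝ), 2 * P.eval r) + B 0) * (2 : ℝ) ^ (-(j : ℝ)) := by
  have hcont : Continuous (fun r : ℝ => 2 * P.eval r) := continuous_const.mul P.continuous
  have hint : ∀ a b : ℝ, IntervalIntegrable (fun r : ℝ => 2 * P.eval r) MeasureTheory.volume a b :=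
    fun a b => hcont.intervalIntegrable a b
  intro j
  induction j with
  | zero => simp
  | succ j ih =>
    have hstep : 2 * P.eval (j : ℝ) ≤ ∫ r in (j : ℝ)..((j : ℝ) + 1), 2 * P.eval r := by
      have h := intervalIntegral.integral_mono_on (μ := MeasureTheory.volume) (a := (j:ℝ)) (b := (j:ℝ)+1)
        (f := fun _ : ℝ => 2 * P.eval (j : ℝ)) (g := fun r : ℝ => 2 * P.eval r)
        (by linarith) (intervalIntegrable_const) (hint _ _)
        (fun x hx => by
          exact mul_le_mul_of_nonneg_left
            (poly_eval_mono P hP (j.cast_nonneg) hx.1) (by norm_num))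
      simpa using h
    have hsplit : (∫ r in (0:ℝ)..((j : ℝ) + 1), 2 * P.eval r)
        = (∫ r in (0:ℝ)..(j : ℝ), 2 * P.eval r) + ∫ r in (j : ℝ)..((j : ℝ) + 1), 2 * P.eval r :=
      (intervalIntegral.integral_add_adjacent_intervals (hint _ _) (hint _ _)).symm
    have hpow : (2 : ℝ) ^ (-((j : ℝ) + 1)) = (2 : ℝ) ^ (-(j : ℝ)) / 2 := by
      rw [neg_add, Real.rpow_add (by norm_num : (0:ℝ) < 2), Real.rpow_neg_one]
      ring
    have hpownn : (0:ℝ) ≤ (2 : ℝ) ^ (-((j : ℝ) + 1)) := Real.rpow_nonneg (by norm_num) _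
    calc B (j + 1) ≤ B j / 2 + P.eval (j : ℝ) * (2 : ℝ) ^ (-(j : ℝ)) := hrec j
      _ ≤ ((∫ r in (0:ℝ)..(j : ℝ), 2 * P.eval r) + B 0) * (2 : ℝ) ^ (-(j : ℝ)) / 2
          + P.eval (j : ℝ) * (2 : ℝ) ^ (-(j : ℝ)) := by linarith
      _ = ((∫ r in (0:ℝ)..(j : ℝ), 2 * P.eval r) + 2 * P.eval (j : ℝ) + B 0)
          * ((2 : ℝ) ^ (-(j : ℝ)) / 2) := by ring
      _ ≤ ((∫ r in (0:ℝ)..((j : ℝ) + 1), 2 * P.eval r) + B 0)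
          * ((2 : ℝ) ^ (-(j : ℝ)) / 2) := by
        apply mul_le_mul_of_nonneg_right _ (by positivity)
        rw [hsplit]; linarith
      _ = ((∫ r in (0:ℝ)..((j : ℕ) + 1 : ℕ), 2 * P.eval r) + B 0)
          * (2 : ℝ) ^ (-(((j : ℕ) + 1 : ℕ) : ℝ)) := by
        push_cast
        rw [hpow]
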